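/- Let n ≥ 2 and m ≥ 1 be integers, and for every integer j let u_j(s) = cosh(s)^j · sinh(s)^{2−n−m} for s > 0 (integer powers, possibly negative). Let κ_i = (m−i−1)(m+n−2−i). Then for every integer i with 0 ≤ i ≤ m−1 and every s > 0: (𝒟_m u_i)(s) − κ_i·u_i(s) = −i(i−1)·u_{i−2}(s). -/

import Mathlib

/-!
Apply `𝒟_k` to a monomial `cosh^p · sinh^q` and reduce with `cosh² = 1 + sinh²`. The
`cosh^p sinh^(q-2)` term has coefficient `q(q+n-2) - k(k+n-2)`, which vanishes for the exponent
`q = 2-n-k`; the coefficient of `cosh^p sinh^q` is `(p+q)(p+q+n-1)`, which for `p = i`,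
`q = 2-n-m` is `κ_i`. What remains is the `-p(p-1) cosh^(p-2) sinh^q` term.
-/

/-- The second-order operator `𝒟_k f (s) = f''(s) + (n-1)·coth(s)·f'(s)
    - (k(k+n-2)/sinh²(s))·f(s)`. -/
noncomputable def Dop (n k : ℤ) (f : ℝ → ℝ) : ℝ → ℝ := fun s =>
  deriv (deriv f) s + ((n : ℝ) - 1) * (Real.cosh s / Real.sinh s) * deriv f s
    - ((k : ℝ) * ((k : ℝ) + (n : ℝ) - 2) / (Real.sinh s) ^ 2) * f s

open Real Filter Topology

theorem hasDerivAt_cosh_zpow_mul_sinh_zpow (p q : ℤ) {t : ℝ} (ht : t ≠ 0) :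
    HasDerivAt (fun r => cosh r ^ p * sinh r ^ q)
      (p * cosh t ^ (p - 1) * sinh t ^ (q + 1) + q * cosh t ^ (p + 1) * sinh t ^ (q - 1)) t := by
  have hC : cosh t ≠ 0 := (cosh_pos t).ne'
  have hS : sinh t ≠ 0 := sinh_ne_zero.2 ht
  have hCp := (hasDerivAt_zpow p (cosh t) (Or.inl hC)).comp t (hasDerivAt_cosh t)
  have hSq := (hasDerivAt_zpow q (sinh t) (Or.inl hS)).comp t (hasDerivAt_sinh t)
  refine (hCp.mul hSq).congr_deriv ?_
  simp only [Function.comp_apply, zpow_add_one₀ hS, zpow_add_one₀ hC]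
  ring

theorem deriv_cosh_zpow_mul_sinh_zpow_eventuallyEq (p q : ℤ) {t : ℝ} (ht : t ≠ 0) :
    deriv (fun r => cosh r ^ p * sinh r ^ q) =ᶠ[𝓝 t] fun r =>
      p * (cosh r ^ (p - 1) * sinh r ^ (q + 1)) + q * (cosh r ^ (p + 1) * sinh r ^ (q - 1)) := by
  filter_upwards [isOpen_ne.mem_nhds ht] with r hr
  rw [(hasDerivAt_cosh_zpow_mul_sinh_zpow p q hr).deriv]
  ring

theorem Dop_cosh_zpow_mul_sinh_zpow (n k p q : ℤ) {s : ℝ} (hs : s ≠ 0) :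
    Dop n k (fun t => cosh t ^ p * sinh t ^ q) s =
      ((p + q) * (p + q + n - 1) : ℤ) * (cosh s ^ p * sinh s ^ q)
        - (p * (p - 1) : ℤ) * (cosh s ^ (p - 2) * sinh s ^ q)
        + (q * (q + n - 2) - k * (k + n - 2) : ℤ) * (cosh s ^ p * sinh s ^ (q - 2)) := by
  have hC : cosh s ≠ 0 := (cosh_pos s).ne'
  have hS : sinh s ≠ 0 := sinh_ne_zero.2 hs
  have hd2 : deriv (deriv fun t => cosh t ^ p * sinh t ^ q) s = _ :=
    (deriv_cosh_zpow_mul_sinh_zpow_eventuallyEq p q hs).deriv_eq.trans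
      ((((hasDerivAt_cosh_zpow_mul_sinh_zpow (p - 1) (q + 1) hs).const_mul (p : ℝ)).add
        ((hasDerivAt_cosh_zpow_mul_sinh_zpow (p + 1) (q - 1) hs).const_mul (q : ℝ))).deriv)
  rw [Dop, hd2, (hasDerivAt_cosh_zpow_mul_sinh_zpow p q hs).deriv]
  simp only [zpow_add₀ hC, zpow_sub₀ hC, zpow_add₀ hS, zpow_sub₀ hS, zpow_one, zpow_two]
  push_cast
  field_simp
  linear_combination
    (p * (1 - p) * sinh s ^ 2 - q * (2 - n - q) * cosh s ^ 2) * cosh_sq' s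

theorem stmt_3 (n m : ℤ)
    (u : ℤ → ℝ → ℝ)
    (hu : ∀ (j : ℤ) (s : ℝ), u j s = Real.cosh s ^ j * Real.sinh s ^ (2 - n - m))
    (κ : ℤ → ℝ) (hκ : ∀ j : ℤ, κ j = ((m - j - 1) * (m + n - 2 - j) : ℤ))
    (i : ℤ) (s : ℝ) (hs : 0 < s) :
    Dop n m (u i) s - κ i * u i s = -((i : ℝ) * ((i : ℝ) - 1)) * u (i - 2) s := by
  have hui : u i = fun t => cosh t ^ i * sinh t ^ (2 - n - m) := funext (hu i)
  rw [hui, Dop_cosh_zpow_mul_sinh_zpow n m i (2 - n - m) hs.ne', hκ, hu]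
  push_cast
  ring
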